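/- Fix real parameters γ, α with γ > 1 and α > 0 and let P = diag(α², (γ−1)/2, (γ−1)/2, 1). For Φ ∈ ℝ⁴ with φ₁ ≠ 0, let u = φ₂/φ₁, v = φ₃/φ₁, let A(Φ) = (1/2)·[[u,1,0,0],[−u², 3u, 0, 4φ₄/φ₁],[−uv, v, 2u, 0],[−γu φ₄/φ₁, γ φ₄/φ₁, 0, 2u]] and B(Φ) = (1/2)·[[v,0,1,0],[−uv, 2v, u, 0],[−v², 0, 3v, 4φ₄/φ₁],[−γv φ₄/φ₁, 0, γ φ₄/φ₁, 2v]], and let Ã(Φ) = [[α²u, 0, 0, 0],[0, ((γ−1)/2)u, 0, 0],[0, 0, ((γ−1)/2)u, 0],[0, 2(γ−1)φ₄/φ₁, 0, (2−γ)u]] and B̃(Φ) = [[α²v, 0, 0, 0],[0, ((γ−1)/2)v, 0, 0],[0, 0, ((γ−1)/2)v, 0],[0, 0, 2(γ−1)φ₄/φ₁, (2−γ)v]]. Suppose Φ : ℝ × ℝ² → ℝ⁴ is differentiable with φ₁(t,x,y) ≠ 0 everywhere and satisfies ∂ₜΦ + A(Φ) ∂ₓΦ + B(Φ) ∂ᵧΦ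 = 0 pointwise. Then the pointwise energy conservation law ∂ₜ( Φᵀ P Φ ) + ∂ₓ( Φᵀ Ã(Φ) Φ ) + ∂ᵧ( Φᵀ B̃(Φ) Φ ) = 0 holds at every (t,x,y). -/

import Mathlib

/-!
Along any coordinate line the energy `E = Φᵀ P Φ` has derivative `2 (PΦ) ⬝ Φ'`, since `P` is
symmetric. Writing the fluxes as `F = ΦᵀÃΦ = u (E + (γ-1) φ₄²)` and `G = ΦᵀB̃Φ = v (E + (γ-1) φ₄²)`,
a direct computation shows that their derivatives along a curve are `2 (PΦ) ⬝ A(Φ) Φ'` and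
`2 (PΦ) ⬝ B(Φ) Φ'`: `P` symmetrizes the system with these entropy fluxes. Summing,
`Eₜ + Fₓ + G_y = 2 (PΦ) ⬝ (Φₜ + A Φₓ + B Φ_y) = 0`.
-/

open Matrix

/-- The diagonal norm matrix `P = diag(α², (γ−1)/2, (γ−1)/2, 1)`. -/
noncomputable def normP (γ α : ℝ) : Matrix (Fin 4) (Fin 4) ℝ :=
  Matrix.diagonal ![α ^ 2, (γ - 1) / 2, (γ - 1) / 2, 1]

/-- The `x`-direction coefficient matrix `A(Φ)` of the transformed Euler equations. -/
noncomputable def matA (γ : ℝ) (φ : Fin 4 → ℝ) : Matrix (Fin 4) (Fin 4) ℝ :=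
  let u := φ 1 / φ 0
  let v := φ 2 / φ 0
  let q := φ 3 / φ 0
  (1 / 2 : ℝ) • !![u, 1, 0, 0;
                   -u ^ 2, 3 * u, 0, 4 * q;
                   -(u * v), v, 2 * u, 0;
                   -(γ * u * q), γ * q, 0, 2 * u]

/-- The `y`-direction coefficient matrix `B(Φ)` of the transformed Euler equations. -/
noncomputable def matB (γ : ℝ) (φ : Fin 4 → ℝ) : Matrix (Fin 4) (Fin 4) ℝ :=
  let u := φ 1 / φ 0
  let v := φ 2 / φ 0
  let q := φ 3 / φ 0
  (1 / 2 : ℝ) • !![v, 0, 1, 0;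
                   -(u * v), 2 * v, u, 0;
                   -v ^ 2, 0, 3 * v, 4 * q;
                   -(γ * v * q), 0, γ * q, 2 * v]

/-- The derived matrix `Ã(Φ)` with free parameters set to zero. -/
noncomputable def matAtil0 (γ α : ℝ) (φ : Fin 4 → ℝ) : Matrix (Fin 4) (Fin 4) ℝ :=
  let u := φ 1 / φ 0
  let q := φ 3 / φ 0
  !![α ^ 2 * u, 0, 0, 0;
     0, (γ - 1) / 2 * u, 0, 0;
     0, 0, (γ - 1) / 2 * u, 0;
     0, 2 * (γ - 1) * q, 0, (2 - γ) * u]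

/-- The derived matrix `B̃(Φ)` with free parameters set to zero. -/
noncomputable def matBtil0 (γ α : ℝ) (φ : Fin 4 → ℝ) : Matrix (Fin 4) (Fin 4) ℝ :=
  let v := φ 2 / φ 0
  let q := φ 3 / φ 0
  !![α ^ 2 * v, 0, 0, 0;
     0, (γ - 1) / 2 * v, 0, 0;
     0, 0, (γ - 1) / 2 * v, 0;
     0, 0, 2 * (γ - 1) * q, (2 - γ) * v]

section QuadraticForm

variable {n : Type*} [Fintype n] {f g : ℝ → n → ℝ} {f' g' : n → ℝ} {s : ℝ}

theorem HasDerivAt.dotProduct (hf : HasDerivAt f f' s) (hg : HasDerivAt g g' s) :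
    HasDerivAt (fun s => f s ⬝ᵥ g s) (f' ⬝ᵥ g s + f s ⬝ᵥ g') s := by
  show HasDerivAt (fun s => ∑ i, f s i * g s i) (∑ i, f' i * g s i + ∑ i, f s i * g' i) s
  rw [← Finset.sum_add_distrib]
  exact HasDerivAt.fun_sum fun i _ => (hasDerivAt_pi.1 hf i).fun_mul (hasDerivAt_pi.1 hg i)

theorem HasDerivAt.const_mulVec (M : Matrix n n ℝ) (hf : HasDerivAt f f' s) :
    HasDerivAt (fun s => M *ᵥ f s) (M *ᵥ f') s :=
  M.mulVecLin.toContinuousLinearMap.hasFDerivAt.comp_hasDerivAt s hf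

theorem HasDerivAt.dotProduct_mulVec_self {M : Matrix n n ℝ} (hM : M.IsSymm)
    (hf : HasDerivAt f f' s) :
    HasDerivAt (fun s => f s ⬝ᵥ M *ᵥ f s) (2 * (M *ᵥ f s ⬝ᵥ f')) s := by
  convert hf.dotProduct (hf.const_mulVec M) using 1
  rw [dotProduct_comm f', dotProduct_mulVec, ← mulVec_transpose, hM.eq]
  ring

end QuadraticForm

variable {γ α : ℝ}

theorem normP_isSymm : (normP γ α).IsSymm :=
  isSymm_diagonal _

theorem normP_mulVec (φ : Fin 4 → ℝ) :
    normP γ α *ᵥ φ = ![α ^ 2 * φ 0, (γ - 1) / 2 * φ 1, (γ - 1) / 2 * φ 2, φ 3] := by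
  ext i
  fin_cases i <;> simp [normP, mulVec_diagonal]

theorem dotProduct_normP_mulVec_self (φ : Fin 4 → ℝ) :
    φ ⬝ᵥ normP γ α *ᵥ φ =
      α ^ 2 * φ 0 ^ 2 + (γ - 1) / 2 * φ 1 ^ 2 + (γ - 1) / 2 * φ 2 ^ 2 + φ 3 ^ 2 := by
  simp only [dotProduct, normP_mulVec, Fin.sum_univ_four, cons_val_zero, cons_val_one, cons_val]
  ring

-- Both sides vanish when `φ 0 = 0`, since `x / 0 = 0`.
theorem dotProduct_matAtil0_mulVec_self (φ : Fin 4 → ℝ) :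
    φ ⬝ᵥ matAtil0 γ α φ *ᵥ φ = φ 1 / φ 0 * (φ ⬝ᵥ normP γ α *ᵥ φ + (γ - 1) * φ 3 ^ 2) := by
  rw [dotProduct_normP_mulVec_self]
  simp only [dotProduct, mulVec, matAtil0, of_apply, cons_val', cons_val_fin_one, Fin.sum_univ_four,
    cons_val_zero, cons_val_one, cons_val]
  ring

theorem dotProduct_matBtil0_mulVec_self (φ : Fin 4 → ℝ) :
    φ ⬝ᵥ matBtil0 γ α φ *ᵥ φ = φ 2 / φ 0 * (φ ⬝ᵥ normP γ α *ᵥ φ + (γ - 1) * φ 3 ^ 2) := by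
  rw [dotProduct_normP_mulVec_self]
  simp only [dotProduct, mulVec, matBtil0, of_apply, cons_val', cons_val_fin_one, Fin.sum_univ_four,
    cons_val_zero, cons_val_one, cons_val]
  ring

variable {f : ℝ → Fin 4 → ℝ} {f' : Fin 4 → ℝ} {s : ℝ}

theorem HasDerivAt.dotProduct_matAtil0_mulVec_self (hf : HasDerivAt f f' s) (h0 : f s 0 ≠ 0) :
    HasDerivAt (fun s => f s ⬝ᵥ matAtil0 γ α (f s) *ᵥ f s)
      (2 * (normP γ α *ᵥ f s ⬝ᵥ matA γ (f s) *ᵥ f')) s := by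
  have hi := hasDerivAt_pi.1 hf
  simp_rw [_root_.dotProduct_matAtil0_mulVec_self]
  refine (((hi 1).fun_div (hi 0) h0).fun_mul ((hf.dotProduct_mulVec_self normP_isSymm).fun_add
    (((hi 3).fun_pow 2).const_mul (γ - 1)))).congr_deriv ?_
  simp only [normP_mulVec, matA, smul_of, smul_cons, smul_empty, smul_eq_mul, cons_mulVec,
    empty_mulVec, cons_dotProduct, dotProduct_cons, dotProduct_of_isEmpty, vecHead, vecTail,
    Function.comp_apply, Fin.succ_zero_eq_one, Fin.succ_one_eq_two, Fin.reduceSucc, cons_val_zero,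
    cons_val_one, cons_val]
  field_simp
  ring

theorem HasDerivAt.dotProduct_matBtil0_mulVec_self (hf : HasDerivAt f f' s) (h0 : f s 0 ≠ 0) :
    HasDerivAt (fun s => f s ⬝ᵥ matBtil0 γ α (f s) *ᵥ f s)
      (2 * (normP γ α *ᵥ f s ⬝ᵥ matB γ (f s) *ᵥ f')) s := by
  have hi := hasDerivAt_pi.1 hf
  simp_rw [_root_.dotProduct_matBtil0_mulVec_self]
  refine (((hi 2).fun_div (hi 0) h0).fun_mul ((hf.dotProduct_mulVec_self normP_isSymm).fun_add
    (((hi 3).fun_pow 2).const_mul (γ - 1)))).congr_deriv ?_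
  simp only [normP_mulVec, matB, smul_of, smul_cons, smul_empty, smul_eq_mul, cons_mulVec,
    empty_mulVec, cons_dotProduct, dotProduct_cons, dotProduct_of_isEmpty, vecHead, vecTail,
    Function.comp_apply, Fin.succ_zero_eq_one, Fin.succ_one_eq_two, Fin.reduceSucc, cons_val_zero,
    cons_val_one, cons_val]
  field_simp
  ring

theorem stmt_6_general (γ α : ℝ)
    (Φ : ℝ → ℝ → ℝ → Fin 4 → ℝ)
    (hΦ : Differentiable ℝ (fun q : ℝ × ℝ × ℝ => Φ q.1 q.2.1 q.2.2))
    (hφ1 : ∀ t x y, Φ t x y 0 ≠ 0)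
    (hPDE : ∀ t x y,
      deriv (fun s => Φ s x y) t
      + (matA γ (Φ t x y)).mulVec (deriv (fun s => Φ t s y) x)
      + (matB γ (Φ t x y)).mulVec (deriv (fun s => Φ t x s) y) = 0) :
    ∀ t x y,
      deriv (fun s => Φ s x y ⬝ᵥ (normP γ α).mulVec (Φ s x y)) t
      + deriv (fun s => Φ t s y ⬝ᵥ (matAtil0 γ α (Φ t s y)).mulVec (Φ t s y)) x
      + deriv (fun s => Φ t x s ⬝ᵥ (matBtil0 γ α (Φ t x s)).mulVec (Φ t x s)) y = 0 := by
  intro t x y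
  have ht : HasDerivAt (fun s => Φ s x y) (deriv (fun s => Φ s x y) t) t :=
    (hΦ.comp (differentiable_id.prodMk (differentiable_const (x, y))) t).hasDerivAt
  have hx : HasDerivAt (fun s => Φ t s y) (deriv (fun s => Φ t s y) x) x :=
    (hΦ.comp ((differentiable_const t).prodMk
      (differentiable_id.prodMk (differentiable_const y))) x).hasDerivAt
  have hy : HasDerivAt (fun s => Φ t x s) (deriv (fun s => Φ t x s) y) y :=
    (hΦ.comp ((differentiable_const t).prodMk
      ((differentiable_const x).prodMk differentiable_id)) y).hasDerivAt
  rw [(ht.dotProduct_mulVec_self normP_isSymm).deriv,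
    (hx.dotProduct_matAtil0_mulVec_self (hφ1 t x y)).deriv,
    (hy.dotProduct_matBtil0_mulVec_self (hφ1 t x y)).deriv,
    ← mul_add, ← mul_add, ← dotProduct_add, ← dotProduct_add, hPDE, dotProduct_zero, mul_zero]

/-- **Pointwise energy conservation for the transformed compressible Euler equations:**
a differentiable solution of `Φₜ + A(Φ)Φₓ + B(Φ)Φ_y = 0` with `φ₁ ≠ 0` satisfies
`(Φᵀ P Φ)ₜ + (Φᵀ Ã(Φ) Φ)ₓ + (Φᵀ B̃(Φ) Φ)_y = 0`. -/
theorem stmt_6 (γ α : ℝ) (hγ : 1 < γ) (hα : 0 < α)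
    (Φ : ℝ → ℝ → ℝ → Fin 4 → ℝ)
    (hΦ : Differentiable ℝ (fun q : ℝ × ℝ × ℝ => Φ q.1 q.2.1 q.2.2))
    (hφ1 : ∀ t x y, Φ t x y 0 ≠ 0)
    (hPDE : ∀ t x y,
      deriv (fun s => Φ s x y) t
      + (matA γ (Φ t x y)).mulVec (deriv (fun s => Φ t s y) x)
      + (matB γ (Φ t x y)).mulVec (deriv (fun s => Φ t x s) y) = 0) :
    ∀ t x y,
      deriv (fun s => Φ s x y ⬝ᵥ (normP γ α).mulVec (Φ s x y)) t
      + deriv (fun s => Φ t s y ⬝ᵥ (matAtil0 γ α (Φ t s y)).mulVec (Φ t s y)) x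
      + deriv (fun s => Φ t x s ⬝ᵥ (matBtil0 γ α (Φ t x s)).mulVec (Φ t x s)) y = 0 :=
  stmt_6_general γ α Φ hΦ hφ1 hPDE
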